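/- Let K be a field of characteristic 2 and let P = K[X,Y] be the polynomial algebra in two variables with the Hamiltonian Poisson bracket {f,g} = (∂f/∂X)(∂g/∂Y) − (∂f/∂Y)(∂g/∂X). Then P is solvable of length 3 (that is, δ_3(P) = 0 and δ_2(P) ≠ 0), but P is not strongly solvable (that is, δ̃_s(P) ≠ 0 for every s ≥ 0). -/

import Mathlib

/-!
In characteristic `2` the squares `∂²/∂X²` and `∂²/∂Y²` of the partial derivatives vanish
(`∂²(p X) = ∂²p · X + 2 ∂p ∂X`). Expanding `∂X ∂Y {f, g}` with the Leibniz rule, every term then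
either contains a square or cancels with its partner, so the mixed partial kills `δ₁`. If
`f_XY = g_XY = 0`, every term of `∂X {f, g}` and of `∂Y {f, g}` contains a square or a mixed
partial, so `δ₂` consists of polynomials with zero gradient, and brackets of those are `0`.
Conversely `X = {X, XY}` and `Y = {XY, Y}` lie in `δ₁`, so `1 = {X, Y} ∈ δ₂`; and since
`c = {X, Y} · c`, every term of the upper derived series is all of `K[X,Y]`.
-/

open MvPolynomial

/-- The Hamiltonian Poisson bracket on `K[X,Y]`:
`{f, g} = (∂f/∂X)(∂g/∂Y) − (∂f/∂Y)(∂g/∂X)`. -/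
noncomputable def hamBracket {K : Type*} [Field K] (f g : MvPolynomial (Fin 2) K) :
    MvPolynomial (Fin 2) K :=
  pderiv 0 f * pderiv 1 g - pderiv 1 f * pderiv 0 g

/-- The derived series of `K[X,Y]` under the Hamiltonian bracket: `δ 0` is everything and
`δ (n+1)` is the `K`-span of all brackets `{a, b}` with `a, b ∈ δ n`. -/
noncomputable def hamDerivedSeries (K : Type*) [Field K] :
    ℕ → Submodule K (MvPolynomial (Fin 2) K)
  | 0 => ⊤
  | n + 1 => Submodule.span K
      {x | ∃ a ∈ hamDerivedSeries K n, ∃ b ∈ hamDerivedSeries K n, x = hamBracket a b}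

/-- The upper derived series of `K[X,Y]` under the Hamiltonian bracket: `δ̃ 0` is everything
and `δ̃ (n+1)` is the `K`-span of all products `{a, b} · c` with `a, b ∈ δ̃ n` and `c`
arbitrary. -/
noncomputable def hamUpperDerivedSeries (K : Type*) [Field K] :
    ℕ → Submodule K (MvPolynomial (Fin 2) K)
  | 0 => ⊤
  | n + 1 => Submodule.span K
      {x | ∃ a ∈ hamUpperDerivedSeries K n, ∃ b ∈ hamUpperDerivedSeries K n,
        ∃ c : MvPolynomial (Fin 2) K, x = hamBracket a b * c}

namespace MvPolynomial

variable {R σ : Type*} [CommRing R]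

theorem pderiv_pderiv_comm (i j : σ) (f : MvPolynomial σ R) :
    pderiv i (pderiv j f) = pderiv j (pderiv i f) := by
  have h : ⁅(pderiv i : Derivation R (MvPolynomial σ R) _), pderiv j⁆ = 0 :=
    derivation_ext fun k => by
      classical
      rw [Derivation.commutator_apply]
      simp [pderiv_X, Pi.single_apply, apply_ite]
  rw [← sub_eq_zero, ← Derivation.commutator_apply, h, Derivation.zero_apply]

theorem pderiv_pderiv_self_of_charP_two [CharP R 2] (i : σ) (f : MvPolynomial σ R) :
    pderiv i (pderiv i f) = 0 := by
  induction f using MvPolynomial.induction_on with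
  | C a => simp
  | add p q hp hq => simp [hp, hq]
  | mul_X p k hp =>
    by_cases hk : k = i
    · subst hk
      simp [hp, CharTwo.add_self_eq_zero]
    · simp [hp, pderiv_X_of_ne hk]

end MvPolynomial

section Hamiltonian

variable {K : Type*} [Field K]

theorem hamBracket_mem_hamDerivedSeries_succ {n : ℕ} {a b : MvPolynomial (Fin 2) K}
    (ha : a ∈ hamDerivedSeries K n) (hb : b ∈ hamDerivedSeries K n) :
    hamBracket a b ∈ hamDerivedSeries K (n + 1) :=
  Submodule.subset_span ⟨a, ha, b, hb, rfl⟩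

theorem hamDerivedSeries_succ_le {n : ℕ} {S : Submodule K (MvPolynomial (Fin 2) K)}
    (h : ∀ a ∈ hamDerivedSeries K n, ∀ b ∈ hamDerivedSeries K n, hamBracket a b ∈ S) :
    hamDerivedSeries K (n + 1) ≤ S :=
  Submodule.span_le.2 <| by rintro _ ⟨a, ha, b, hb, rfl⟩; exact h a ha b hb

theorem hamBracket_X_zero_X_one : hamBracket (X 0 : MvPolynomial (Fin 2) K) (X 1) = 1 := by
  simp [hamBracket]

theorem X_mem_hamDerivedSeries_one (i : Fin 2) :
    (X i : MvPolynomial (Fin 2) K) ∈ hamDerivedSeries K 1 := by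
  have hX0 : hamBracket (X 0 : MvPolynomial (Fin 2) K) (X 0 * X 1) = X 0 := by
    simp [hamBracket]
  have hX1 : hamBracket (X 0 * X 1 : MvPolynomial (Fin 2) K) (X 1) = X 1 := by
    simp [hamBracket]
  fin_cases i
  · exact hX0 ▸ hamBracket_mem_hamDerivedSeries_succ trivial trivial
  · exact hX1 ▸ hamBracket_mem_hamDerivedSeries_succ trivial trivial

theorem one_mem_hamDerivedSeries_two : (1 : MvPolynomial (Fin 2) K) ∈ hamDerivedSeries K 2 :=
  hamBracket_X_zero_X_one (K := K) ▸ hamBracket_mem_hamDerivedSeries_succ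
    (X_mem_hamDerivedSeries_one 0) (X_mem_hamDerivedSeries_one 1)

theorem hamUpperDerivedSeries_eq_top (s : ℕ) : hamUpperDerivedSeries K s = ⊤ := by
  induction s with
  | zero => rfl
  | succ n ih =>
    refine eq_top_iff.2 fun x _ => Submodule.subset_span ⟨X 0, ?_, X 1, ?_, x, ?_⟩
    · simp [ih]
    · simp [ih]
    · rw [hamBracket_X_zero_X_one, one_mul]

variable [CharP K 2]

theorem pderiv_zero_pderiv_one_hamBracket (f g : MvPolynomial (Fin 2) K) :
    pderiv 0 (pderiv 1 (hamBracket f g)) = 0 := by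
  simp only [hamBracket, map_sub, pderiv_mul, pderiv_pderiv_self_of_charP_two,
    pderiv_pderiv_comm (1 : Fin 2) 0, mul_zero, zero_mul, add_zero, zero_add]
  ring

theorem pderiv_zero_pderiv_one_of_mem_hamDerivedSeries_one {f : MvPolynomial (Fin 2) K}
    (hf : f ∈ hamDerivedSeries K 1) : pderiv 0 (pderiv 1 f) = 0 := by
  have : hamDerivedSeries K 1 ≤
      LinearMap.ker ((pderiv 0).toLinearMap ∘ₗ (pderiv 1).toLinearMap) :=
    hamDerivedSeries_succ_le fun a _ b _ => pderiv_zero_pderiv_one_hamBracket a b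
  exact this hf

theorem pderiv_hamBracket_eq_zero (i : Fin 2) {f g : MvPolynomial (Fin 2) K}
    (hf : pderiv 0 (pderiv 1 f) = 0) (hg : pderiv 0 (pderiv 1 g) = 0) :
    pderiv i (hamBracket f g) = 0 := by
  fin_cases i <;>
    simp [hamBracket, pderiv_pderiv_self_of_charP_two, pderiv_pderiv_comm (1 : Fin 2) 0, hf, hg]

theorem pderiv_eq_zero_of_mem_hamDerivedSeries_two (i : Fin 2) {f : MvPolynomial (Fin 2) K}
    (hf : f ∈ hamDerivedSeries K 2) : pderiv i f = 0 := by
  have : hamDerivedSeries K 2 ≤ LinearMap.ker (pderiv i).toLinearMap :=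
    hamDerivedSeries_succ_le fun a ha b hb => pderiv_hamBracket_eq_zero i
      (pderiv_zero_pderiv_one_of_mem_hamDerivedSeries_one ha)
      (pderiv_zero_pderiv_one_of_mem_hamDerivedSeries_one hb)
  exact this hf

theorem hamDerivedSeries_three_eq_bot : hamDerivedSeries K 3 = ⊥ :=
  eq_bot_iff.2 <| hamDerivedSeries_succ_le fun a ha _ _ => by
    simp [hamBracket, pderiv_eq_zero_of_mem_hamDerivedSeries_two _ ha]

end Hamiltonian

/-- Monteiro Alves–Petrogradsky: over a field of characteristic `2`, the Hamiltonian Poisson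
algebra `H₂ = K[X,Y]` is solvable of length `3` (`δ_3 = 0` and `δ_2 ≠ 0`), but not strongly
solvable (`δ̃_s ≠ 0` for every `s`). -/
theorem hamiltonian_solvable_not_stronglySolvable_char_two
    (K : Type*) [Field K] [CharP K 2] :
    hamDerivedSeries K 3 = ⊥ ∧ hamDerivedSeries K 2 ≠ ⊥ ∧
      ∀ s : ℕ, hamUpperDerivedSeries K s ≠ ⊥ :=
  ⟨hamDerivedSeries_three_eq_bot,
    (Submodule.ne_bot_iff _).2 ⟨1, one_mem_hamDerivedSeries_two, one_ne_zero⟩,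
    fun s => by simp [hamUpperDerivedSeries_eq_top]⟩
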